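/- For n ≥ 2 and k ∈ ℝ, define h_k(t) = (∫₀ᵗ s_k(r)^{n-1} dr) / s_k(t)^{n-1}, where s_k(r) = r if k = 0, s_k(r) = sin(√k r)/√k if k > 0, and s_k(r) = sinh(√(-k) r)/√(-k) if k < 0. Then h_k is increasing on (0, l), where l = ∞ if k ≤ 0 and l = π/√k if k > 0. -/

import Mathlib

/-- Generalized sine `s_k`. -/
noncomputable def sk (k t : ℝ) : ℝ :=
  if k = 0 then t
  else if 0 < k then Real.sin (Real.sqrt k * t) / Real.sqrt k
  else Real.sinh (Real.sqrt (-k) * t) / Real.sqrt (-k)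

/-- The volume-to-area ratio `h_k(t)` of geodesic balls of radius `t` in the
`n`-dimensional simply connected space form of curvature `k`. -/
noncomputable def hk (k : ℝ) (n : ℕ) (t : ℝ) : ℝ :=
  (∫ r in (0:ℝ)..t, sk k r ^ (n - 1)) / sk k t ^ (n - 1)

open Set intervalIntegral Real

/-!
Write `g = s_k^(n-1)`, so that `h_k = (∫₀ᵗ g) / g` and
`h_k' = (g(t)² - g'(t) ∫₀ᵗ g) / g(t)²`. Since `g(0) = 0`, `g(t)² = ∫₀ᵗ g'(r) g(t) dr`, so it
suffices that `g(r) g'(t) ≤ g'(r) g(t)` for `0 ≤ r ≤ t`, i.e. that `g'/g` is decreasing.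
For `g = s_k^(n-1)` this reduces to `c_k(t) s_k(r) ≤ c_k(r) s_k(t)`, and the difference of the
two sides is `s_k(t - r) ≥ 0` by the subtraction formula for the generalized sine.
-/

theorem monotoneOn_integral_div {g g' : ℝ → ℝ} {I : Set ℝ} (hI : Convex ℝ I)
    (hI0 : I ⊆ Ioi 0) (hg : ∀ t, HasDerivAt g (g' t) t) (hg' : Continuous g')
    (hg0 : g 0 = 0) (hne : ∀ t ∈ I, g t ≠ 0)
    (hcross : ∀ t ∈ I, ∀ r ∈ Icc 0 t, g r * g' t ≤ g' r * g t) :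
    MonotoneOn (fun t => (∫ r in (0:ℝ)..t, g r) / g t) I := by
  have hgc : Continuous g := continuous_iff_continuousAt.2 fun t => (hg t).continuousAt
  have hderiv : ∀ t ∈ I, HasDerivAt (fun t => (∫ r in (0:ℝ)..t, g r) / g t)
      ((g t * g t - (∫ r in (0:ℝ)..t, g r) * g' t) / g t ^ 2) t := fun t ht =>
    (hgc.integral_hasStrictDerivAt 0 t).hasDerivAt.div (hg t) (hne t ht)
  have hnum : ∀ t ∈ I, (∫ r in (0:ℝ)..t, g r) * g' t ≤ g t * g t := fun t ht =>
    calc (∫ r in (0:ℝ)..t, g r) * g' t = ∫ r in (0:ℝ)..t, g r * g' t :=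
          (integral_mul_const _ _).symm
      _ ≤ ∫ r in (0:ℝ)..t, g' r * g t :=
          integral_mono_on (hI0 ht).le ((hgc.mul continuous_const).intervalIntegrable _ _)
            ((hg'.mul continuous_const).intervalIntegrable _ _) (hcross t ht)
      _ = g t * g t := by
          rw [integral_mul_const, integral_eq_sub_of_hasDerivAt (fun r _ => hg r)
            (hg'.intervalIntegrable _ _), hg0, sub_zero]
  refine monotoneOn_of_hasDerivWithinAt_nonneg hI
    (fun t ht => (hderiv t ht).continuousAt.continuousWithinAt)
    (fun t ht => (hderiv t (interior_subset ht)).hasDerivWithinAt)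
    (fun t ht => div_nonneg ?_ (sq_nonneg _))
  linarith [hnum t (interior_subset ht)]

/-- The logarithmic derivative of `s ^ m` is `m` times that of `s`, so the cross inequality
`s' t * s r ≤ s' r * s t` passes to powers. -/
theorem pow_mul_deriv_pow_le {a b a' b' : ℝ} (m : ℕ) (ha : 0 ≤ a) (hb : 0 ≤ b)
    (h : b' * a ≤ a' * b) :
    a ^ m * (m * b ^ (m - 1) * b') ≤ m * a ^ (m - 1) * a' * b ^ m := by
  cases m with
  | zero => simp
  | succ m =>
    rw [Nat.add_sub_cancel]
    have hc : 0 ≤ ((m + 1 : ℕ) : ℝ) * (a ^ m * b ^ m) := by positivity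
    calc _ = ((m + 1 : ℕ) : ℝ) * (a ^ m * b ^ m) * (b' * a) := by ring
      _ ≤ ((m + 1 : ℕ) : ℝ) * (a ^ m * b ^ m) * (a' * b) := mul_le_mul_of_nonneg_left h hc
      _ = _ := by ring

/-- Generalized cosine `c_k = s_k'`. -/
noncomputable def ck (k t : ℝ) : ℝ :=
  if k = 0 then 1
  else if 0 < k then Real.cos (Real.sqrt k * t)
  else Real.cosh (Real.sqrt (-k) * t)

theorem hasDerivAt_sk (k t : ℝ) : HasDerivAt (sk k) (ck k t) t := by
  unfold sk ck
  split_ifs with h0 hpos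
  · exact hasDerivAt_id t
  · have hc : √k ≠ 0 := (sqrt_pos.2 hpos).ne'
    exact (((hasDerivAt_id t).const_mul √k).sin.div_const √k).congr_deriv (by simp [hc])
  · have hc : √(-k) ≠ 0 := (sqrt_pos.2 (by grind)).ne'
    exact (((hasDerivAt_id t).const_mul √(-k)).sinh.div_const √(-k)).congr_deriv (by simp [hc])

theorem continuous_sk (k : ℝ) : Continuous (sk k) :=
  continuous_iff_continuousAt.2 fun t => (hasDerivAt_sk k t).continuousAt

theorem continuous_ck (k : ℝ) : Continuous (ck k) := by
  unfold ck
  split_ifs <;> fun_prop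

theorem sk_zero_right (k : ℝ) : sk k 0 = 0 := by
  simp [sk]

theorem sk_sub (k t r : ℝ) : sk k (t - r) = sk k t * ck k r - ck k t * sk k r := by
  unfold sk ck
  split_ifs
  · ring
  · rw [mul_sub, Real.sin_sub]; ring
  · rw [mul_sub, Real.sinh_sub]; ring

theorem sk_nonneg {k t : ℝ} (ht : 0 ≤ t) (htk : √k * t ≤ π) : 0 ≤ sk k t := by
  unfold sk
  split_ifs
  · exact ht
  · exact div_nonneg (sin_nonneg_of_nonneg_of_le_pi (by positivity) htk) (sqrt_nonneg _)
  · exact div_nonneg (sinh_nonneg_iff.2 (by positivity)) (sqrt_nonneg _)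

theorem sk_pos {k t : ℝ} (ht : 0 < t) (htk : √k * t < π) : 0 < sk k t := by
  unfold sk
  split_ifs with h0 hpos
  · exact ht
  · exact div_pos (sin_pos_of_pos_of_lt_pi (by positivity) htk) (sqrt_pos.2 hpos)
  · have hc : 0 < √(-k) := sqrt_pos.2 (by grind)
    exact div_pos (sinh_pos_iff.2 (mul_pos hc ht)) hc

theorem ck_mul_sk_le {k r t : ℝ} (hr : 0 ≤ r) (hrt : r ≤ t) (htk : √k * t ≤ π) :
    ck k t * sk k r ≤ ck k r * sk k t := by
  have h := sk_nonneg (k := k) (sub_nonneg.2 hrt)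
    (by nlinarith [sqrt_nonneg k] : √k * (t - r) ≤ π)
  rw [sk_sub] at h
  linarith

/-- Since `√k = 0` for `k ≤ 0`, the set is `(0, ∞)` for `k ≤ 0` and `(0, π/√k)` for `k > 0`. -/
theorem monotoneOn_hk {n : ℕ} (hn : 2 ≤ n) (k : ℝ) :
    MonotoneOn (hk k n) {t | 0 < t ∧ √k * t < π} := by
  have hconvex : Convex ℝ {t : ℝ | 0 < t ∧ √k * t < π} :=
    (convex_Ioi 0).inter (convex_halfSpace_lt (IsLinearMap.isLinearMap_smul √k) π)
  refine monotoneOn_integral_div hconvex (fun t ht => ht.1)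
    (fun t => (hasDerivAt_sk k t).fun_pow (n - 1))
    ((continuous_const.mul ((continuous_sk k).pow _)).mul (continuous_ck k))
    (by simp [sk_zero_right, show n - 1 ≠ 0 by omega])
    (fun t ht => pow_ne_zero _ (sk_pos ht.1 ht.2).ne') fun t ht r hr => ?_
  have hrk : √k * r ≤ π := by nlinarith [sqrt_nonneg k, hr.2, ht.2]
  exact pow_mul_deriv_pow_le _ (sk_nonneg hr.1 hrk) (sk_nonneg ht.1.le ht.2.le)
    (ck_mul_sk_le hr.1 hr.2 ht.2.le)

/-- `h_k` is increasing on `(0, l)` where `l = ∞` if `k ≤ 0` and `l = π/√k` if `k > 0`. -/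
theorem stmt_3 (n : ℕ) (hn : 2 ≤ n) (k : ℝ) :
    (k ≤ 0 → MonotoneOn (hk k n) (Set.Ioi 0)) ∧
    (0 < k → MonotoneOn (hk k n) (Set.Ioo 0 (Real.pi / Real.sqrt k))) := by
  refine ⟨fun hk0 => (monotoneOn_hk hn k).mono fun t ht => ⟨ht, ?_⟩,
    fun hk0 => (monotoneOn_hk hn k).mono fun t ht => ⟨ht.1, ?_⟩⟩
  · rw [sqrt_eq_zero'.2 hk0, zero_mul]
    exact pi_pos
  · exact (lt_div_iff₀' (sqrt_pos.2 hk0)).1 ht.2
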